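/- arXiv:2209.13394 — 4 statements merged into one kernel-verified Lean document; each statement's English description precedes it below -/
import Mathlib

section
/- Consider the planar ODE system d/dt ‖w‖ = -(1/2)‖w‖ + (1/2)‖w*‖ (sin φ - φ cos φ)/π and dφ/dt = (1/2)(‖w*‖/‖w‖)(φ sin φ)/π with initial conditions 0 < φ(0) < π and ‖w(0)‖ ≠ 0. Then φ(t) is strictly increasing and converges to π as t → ∞, and ‖w(t)‖ converges to ‖w*‖. -/
/-!
The angle equation has `φ' ≥ 0`, and near the equilibrium `π` it satisfies
`φ' ≤ C (π - φ)` on bounded time intervals, so by Grönwall `π - φ` stays positive and `φ`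
increases strictly. The magnitude relaxes as `W' = (g - W) / 2` towards the drive
`g = a (sin φ - φ cos φ) / π < 2a`, hence `W` is eventually bounded. If the limit `L` of `φ` were
below `π`, bounded `W` would give `φ' ≳ L sin L > 0` eventually, contradicting boundedness of `φ`.
So `φ → π`, the drive tends to `a`, and the relaxation forces `W → a`.
-/

open Real Filter Set Topology

theorem sub_le_mul_exp_of_hasDerivAt_le_mul_sub {f f' : ℝ → ℝ} {k M T t : ℝ}
    (hf : ∀ s, HasDerivAt f (f' s) s) (hTt : T ≤ t)
    (h : ∀ s ∈ Ioo T t, f' s ≤ k * (M - f s)) :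
    f t - M ≤ (f T - M) * exp (-(k * (t - T))) := by
  set g := fun s => (f s - M) * exp (k * s)
  have hg : ∀ s, HasDerivAt g (exp (k * s) * (f' s - k * (M - f s))) s := fun s =>
    (((hf s).sub_const M).mul ((hasDerivAt_id' s).const_mul k).exp).congr_deriv (by ring)
  have hanti : AntitoneOn g (Icc T t) :=
    antitoneOn_of_deriv_nonpos (convex_Icc T t)
      (fun s _ => (hg s).continuousAt.continuousWithinAt)
      (fun s _ => (hg s).differentiableAt.differentiableWithinAt)
      (fun s hs => by
        rw [interior_Icc] at hs
        rw [(hg s).deriv]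
        exact mul_nonpos_of_nonneg_of_nonpos (exp_pos _).le (by linarith [h s hs]))
  calc f t - M = g t * exp (-(k * t)) := by simp only [g, mul_assoc, ← exp_add]; simp
    _ ≤ g T * exp (-(k * t)) :=
      mul_le_mul_of_nonneg_right (hanti (left_mem_Icc.2 hTt) (right_mem_Icc.2 hTt) hTt)
        (exp_pos _).le
    _ = (f T - M) * exp (-(k * (t - T))) := by
      simp only [g, mul_assoc, ← exp_add]; ring_nf

theorem eventually_lt_of_hasDerivAt_mul_sub {f g : ℝ → ℝ} {k M u : ℝ} (hk : 0 < k)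
    (hf : ∀ t, HasDerivAt f (k * (g t - f t)) t) (hg : ∀ᶠ t in atTop, g t < M) (hMu : M < u) :
    ∀ᶠ t in atTop, f t < u := by
  obtain ⟨T, hT⟩ := eventually_atTop.1 hg
  have hdecay : Tendsto (fun t => (f T - M) * exp (-(k * (t - T)))) atTop (𝓝 0) := by
    simpa [sub_eq_add_neg] using (tendsto_exp_atBot.comp (tendsto_neg_atTop_atBot.comp
      ((tendsto_atTop_add_const_right _ (-T) tendsto_id).const_mul_atTop hk))).const_mul
      (f T - M)
  filter_upwards [hdecay.eventually (gt_mem_nhds (sub_pos.2 hMu)), eventually_ge_atTop T]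
    with t hsmall hTt
  have := sub_le_mul_exp_of_hasDerivAt_le_mul_sub (M := M) hf hTt fun s hs =>
    mul_le_mul_of_nonneg_left (by linarith [hT s hs.1.le]) hk.le
  linarith

theorem tendsto_of_hasDerivAt_mul_sub {f g : ℝ → ℝ} {k L : ℝ} (hk : 0 < k)
    (hf : ∀ t, HasDerivAt f (k * (g t - f t)) t) (hg : Tendsto g atTop (𝓝 L)) :
    Tendsto f atTop (𝓝 L) := by
  refine tendsto_order.2 ⟨fun l hl => ?_, fun u hu => ?_⟩
  · obtain ⟨M, hlM, hML⟩ := exists_between hl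
    have hneg : ∀ t, HasDerivAt (-f) (k * (-g t - (-f) t)) t := fun t =>
      (hf t).neg.congr_deriv (by simp only [Pi.neg_apply]; ring)
    filter_upwards [eventually_lt_of_hasDerivAt_mul_sub hk hneg
      ((tendsto_order.1 hg).1 M hML |>.mono fun t ht => neg_lt_neg ht) (neg_lt_neg hlM)]
      with t ht
    simpa using ht
  · obtain ⟨M, hLM, hMu⟩ := exists_between hu
    exact eventually_lt_of_hasDerivAt_mul_sub hk hf ((tendsto_order.1 hg).2 M hLM) hMu

theorem tendsto_atTop_of_hasDerivAt_of_eventually_ge {f f' : ℝ → ℝ} {δ : ℝ} (hδ : 0 < δ)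
    (hf : ∀ t, HasDerivAt f (f' t) t) (h : ∀ᶠ t in atTop, δ ≤ f' t) :
    Tendsto f atTop atTop := by
  obtain ⟨T, hT⟩ := eventually_atTop.1 h
  have hlin : ∀ t ≥ T, f T + δ * (t + -T) ≤ f t := fun t ht => by
    have := (convex_Ici T).mul_sub_le_image_sub_of_le_deriv
      (fun s _ => (hf s).continuousAt.continuousWithinAt)
      (fun s _ => (hf s).differentiableAt.differentiableWithinAt)
      (fun s hs => by rw [interior_Ici] at hs; rw [(hf s).deriv]; exact hT s (le_of_lt hs))
      T self_mem_Ici t ht ht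
    linarith
  exact tendsto_atTop_mono' _ (eventually_ge_atTop T |>.mono hlin)
    (tendsto_atTop_add_const_left _ _
      ((tendsto_atTop_add_const_right _ (-T) tendsto_id).const_mul_atTop hδ))

theorem mul_sin_le_pi_mul_pi_sub {x : ℝ} (hx₀ : 0 ≤ x) (hxπ : x ≤ π) :
    x * sin x ≤ π * (π - x) := by
  have hsin : sin x ≤ π - x := by simpa [sin_pi_sub] using sin_le (sub_nonneg.2 hxπ)
  exact mul_le_mul hxπ hsin (sin_nonneg_of_nonneg_of_le_pi hx₀ hxπ) pi_pos.le

theorem sin_sub_mul_cos_lt_two_mul_pi {x : ℝ} (hx₀ : 0 ≤ x) (hxπ : x ≤ π) :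
    sin x - x * cos x < 2 * π := by
  nlinarith [sin_le_one x, neg_one_le_cos x, mul_le_mul_of_nonneg_left (neg_one_le_cos x) hx₀,
    pi_gt_three]

section ReluFlow

variable {a : ℝ} {W φ : ℝ → ℝ}

theorem relu_angle_monotone (ha : 0 < a) (hWpos : ∀ t, 0 < W t)
    (hφrange : ∀ t, 0 < φ t ∧ φ t ≤ π)
    (hφ : ∀ t, HasDerivAt φ ((1/2) * (a / W t) * (φ t * sin (φ t)) / π) t) :
    Monotone φ :=
  monotone_of_deriv_nonneg (fun t => (hφ t).differentiableAt) fun t => by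
    have := sin_nonneg_of_nonneg_of_le_pi (hφrange t).1.le (hφrange t).2
    have := hWpos t
    have := (hφrange t).1
    rw [(hφ t).deriv]
    positivity

theorem relu_angle_lt_pi (ha : 0 < a) (hWpos : ∀ t, 0 < W t) (hWcont : Continuous W)
    (hφrange : ∀ t, 0 < φ t ∧ φ t ≤ π)
    (hφ : ∀ t, HasDerivAt φ ((1/2) * (a / W t) * (φ t * sin (φ t)) / π) t) (h0 : φ 0 < π)
    (t : ℝ) : φ t < π := by
  rcases le_or_gt t 0 with ht | ht
  · exact (relu_angle_monotone ha hWpos hφrange hφ ht).trans_lt h0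
  obtain ⟨C, hC⟩ := isCompact_Icc.bddAbove_image (f := fun s => a / W s) (K := Icc 0 t)
    (continuousOn_const.div hWcont.continuousOn fun s _ => (hWpos s).ne')
  have hslow : ∀ s ∈ Ioo 0 t, (1/2) * (a / W s) * (φ s * sin (φ s)) / π ≤ C / 2 * (π - φ s) :=
    fun s hs => by
      have hCs : a / W s ≤ C := hC (mem_image_of_mem _ (Ioo_subset_Icc_self hs))
      have := (div_pos ha (hWpos s)).le.trans hCs
      have := mul_sin_le_pi_mul_pi_sub (hφrange s).1.le (hφrange s).2
      have := sin_nonneg_of_nonneg_of_le_pi (hφrange s).1.le (hφrange s).2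
      have := hWpos s
      have := (hφrange s).1
      calc (1/2) * (a / W s) * (φ s * sin (φ s)) / π ≤ (1/2) * C * (π * (π - φ s)) / π := by
            gcongr
        _ = C / 2 * (π - φ s) := by field_simp
  have := sub_le_mul_exp_of_hasDerivAt_le_mul_sub hφ ht.le hslow
  nlinarith [mul_neg_of_neg_of_pos (sub_neg.2 h0) (exp_pos (-(C / 2 * (t - 0))))]

theorem relu_tendsto_angle_pi (hWpos : ∀ t, 0 < W t) (hφpos : ∀ t, 0 < φ t)
    (hφ : ∀ t, HasDerivAt φ ((1/2) * (a / W t) * (φ t * sin (φ t)) / π) t)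
    (hmono : Monotone φ) (hlt : ∀ t, φ t < π) (hWbdd : ∀ᶠ t in atTop, W t < 3 * a) :
    Tendsto φ atTop (𝓝 π) := by
  have hbdd : BddAbove (range φ) := ⟨π, forall_mem_range.2 fun t => (hlt t).le⟩
  have hL : Tendsto φ atTop (𝓝 (⨆ t, φ t)) := tendsto_atTop_ciSup hmono hbdd
  set L := ⨆ t, φ t
  suffices L = π from this ▸ hL
  by_contra hne
  have hLpos : 0 < L := (hφpos 0).trans_le (le_ciSup hbdd 0)
  have hLπ : L < π := lt_of_le_of_ne (ciSup_le fun t => (hlt t).le) hne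
  have hm : 0 < L * sin L := mul_pos hLpos (sin_pos_of_pos_of_lt_pi hLpos hLπ)
  have hprod : ∀ᶠ t in atTop, L * sin L / 2 < φ t * sin (φ t) :=
    ((continuous_id.mul continuous_sin).tendsto L).comp hL |>.eventually
      (lt_mem_nhds (half_lt_self hm))
  have hfast : ∀ᶠ t in atTop,
      (1/2) * (1/3) * (L * sin L / 2) / π ≤ (1/2) * (a / W t) * (φ t * sin (φ t)) / π := by
    filter_upwards [hprod, hWbdd] with t hprod_t hW_t
    have : 1/3 ≤ a / W t := by rw [le_div_iff₀ (hWpos t)]; linarith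
    gcongr
  exact not_tendsto_atTop_of_tendsto_nhds hL
    (tendsto_atTop_of_hasDerivAt_of_eventually_ge (by positivity) hφ hfast)

end ReluFlow

theorem one_layer_global_convergence_general
    (a : ℝ) (ha : 0 < a) (W φ : ℝ → ℝ)
    (hWpos : ∀ t, 0 < W t)
    (hφrange : ∀ t, 0 < φ t ∧ φ t ≤ π)
    (hW : ∀ t, HasDerivAt W
      (-(1/2) * W t + (1/2) * a * (Real.sin (φ t) - φ t * Real.cos (φ t)) / π) t)
    (hφ : ∀ t, HasDerivAt φ ((1/2) * (a / W t) * (φ t * Real.sin (φ t)) / π) t)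
    (h0 : 0 < φ 0 ∧ φ 0 < π) :
    StrictMono φ ∧ Tendsto φ atTop (nhds π) ∧ Tendsto W atTop (nhds a) := by
  set drive : ℝ → ℝ := fun t => a * (sin (φ t) - φ t * cos (φ t)) / π
  have hW' : ∀ t, HasDerivAt W ((1/2) * (drive t - W t)) t := fun t =>
    (hW t).congr_deriv (by ring)
  have hdrive_lt : ∀ t, drive t < 2 * a := fun t => by
    rw [div_lt_iff₀ pi_pos]
    nlinarith [sin_sub_mul_cos_lt_two_mul_pi (hφrange t).1.le (hφrange t).2]
  have hWbdd : ∀ᶠ t in atTop, W t < 3 * a :=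
    eventually_lt_of_hasDerivAt_mul_sub one_half_pos hW' (.of_forall hdrive_lt) (by linarith)
  have hWcont : Continuous W := continuous_iff_continuousAt.2 fun t => (hW t).continuousAt
  have hlt := relu_angle_lt_pi ha hWpos hWcont hφrange hφ h0.2
  have hφπ := relu_tendsto_angle_pi hWpos (fun t => (hφrange t).1) hφ
    (relu_angle_monotone ha hWpos hφrange hφ) hlt hWbdd
  refine ⟨strictMono_of_deriv_pos fun t => ?_, hφπ, ?_⟩
  · have := sin_pos_of_pos_of_lt_pi (hφrange t).1 (hlt t)
    have := hWpos t
    have := (hφrange t).1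
    rw [(hφ t).deriv]
    positivity
  · refine tendsto_of_hasDerivAt_mul_sub one_half_pos hW' ?_
    have := ((by fun_prop : Continuous fun x => a * (sin x - x * cos x) / π).tendsto π).comp hφπ
    simpa [drive, Function.comp_def, sin_pi, cos_pi, pi_ne_zero] using this

/-- Global convergence for the magnitude-angle gradient-flow system of a one-layer single
ReLU neuron: `φ(t)` strictly increases to `π` and `‖w(t)‖` converges to `‖w*‖ = a`. -/
theorem one_layer_global_convergence
    (a : ℝ) (ha : 0 < a) (W φ : ℝ → ℝ)
    (hWpos : ∀ t, 0 < W t)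
    (hφrange : ∀ t, 0 < φ t ∧ φ t ≤ π)
    (hW : ∀ t, HasDerivAt W
      (-(1/2) * W t + (1/2) * a * (Real.sin (φ t) - φ t * Real.cos (φ t)) / π) t)
    (hφ : ∀ t, HasDerivAt φ ((1/2) * (a / W t) * (φ t * Real.sin (φ t)) / π) t)
    (h0 : 0 < φ 0 ∧ φ 0 < π) (hW0 : W 0 ≠ 0) :
    StrictMono φ ∧ Tendsto φ atTop (nhds π) ∧ Tendsto W atTop (nhds a) :=
  one_layer_global_convergence_general a ha W φ hWpos hφrange hW hφ h0
end

section
/- Let ‖w(t)‖ and φ(t) solve d/dt ‖w‖ = -(1/2)‖w‖ + (1/2)‖w*‖(sin φ - φ cos φ)/π, dφ/dt = (1/2)(‖w*‖/‖w‖)(φ sin φ)/π, with φ(0) = φ_0 ∈ (0, π). Define ε_0 = 1 - (sin φ_0 - φ_0 cos φ_0)/π > 0. Then for all t > 0, (1-ε_0)(1-e^{-t/2})‖w*‖ + ‖w(0)‖e^{-t/2} < ‖w(t)‖ < (1-e^{-t/2})‖w*‖ + ‖w(0)‖e^{-t/2}. -/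
open Real Set

/-!
Write `g x = sin x - x * cos x`. The magnitude equation is the linear relaxation
`W' = (a g(φ) / π - W) / 2`, so by variation of constants both bounds follow from
`(1 - ε₀) a < a g(φ t) / π < a` for `t > 0`. The angle equation has the equilibria `0` and `π`
and a locally Lipschitz right-hand side, so by uniqueness `φ t` never leaves `(0, π)`; there
`φ' > 0`, and `g` increases on `[0, π]` with `g π = π`.
-/

theorem strictMonoOn_sin_sub_mul_cos :
    StrictMonoOn (fun x => sin x - x * cos x) (Icc 0 π) := by
  refine strictMonoOn_of_hasDerivWithinAt_pos (f' := fun x => x * sin x) (convex_Icc 0 π)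
    (by fun_prop) (fun x _ => ?_) fun x hx => ?_
  · exact ((hasDerivAt_sin x).sub ((hasDerivAt_id x).mul (hasDerivAt_cos x))).hasDerivWithinAt
      |>.congr_deriv (by simp only [id_eq]; ring)
  · rw [interior_Icc] at hx
    exact mul_pos hx.1 (sin_pos_of_pos_of_lt_pi hx.1 hx.2)

theorem sin_sub_mul_cos_lt_pi {x : ℝ} (hx : x ∈ Ioo 0 π) : sin x - x * cos x < π := by
  simpa using strictMonoOn_sin_sub_mul_cos (Ioo_subset_Icc_self hx) (right_mem_Icc.2 pi_pos.le) hx.2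

theorem eq_at_left_of_hasDerivAt_mul_of_apply_eq_zero {k h f : ℝ → ℝ} {a b c : ℝ}
    (hk : ContinuousOn k (Icc a b)) (hh : LocallyLipschitz h) (hc : h c = 0)
    (hf : ∀ t ∈ Icc a b, HasDerivAt f (k t * h (f t)) t) (hab : a ≤ b) (hb : f b = c) :
    f a = c := by
  have hfc : ContinuousOn f (Icc a b) := HasDerivAt.continuousOn hf
  obtain ⟨L, hL⟩ := hh.locallyLipschitzOn.exists_lipschitzOnWith_of_compact
    ((isCompact_Icc.image_of_continuousOn hfc).insert c)
  obtain ⟨C, hC⟩ := isCompact_Icc.exists_bound_of_continuousOn hk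
  have hv : ∀ t ∈ Ioc a b, LipschitzOnWith (C.toNNReal * L) (fun x => k t * h x)
      (insert c (f '' Icc a b)) := fun t ht =>
    LipschitzOnWith.of_dist_le_mul fun x hx y hy => by
      calc dist (k t * h x) (k t * h y) = |k t| * dist (h x) (h y) := by
            rw [Real.dist_eq, Real.dist_eq, ← mul_sub, abs_mul]
        _ ≤ C.toNNReal * (L * dist x y) :=
            mul_le_mul ((hC t (Ioc_subset_Icc_self ht)).trans (le_coe_toNNReal C))
              (hL.dist_le_mul x hx y hy) dist_nonneg (by positivity)
        _ = ↑(C.toNNReal * L) * dist x y := by push_cast; ring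
  refine ODE_solution_unique_of_mem_Icc_left hv hfc
    (fun t ht => (hf t (Ioc_subset_Icc_self ht)).hasDerivWithinAt)
    (fun t ht => mem_insert_of_mem c (mem_image_of_mem f (Ioc_subset_Icc_self ht)))
    (g := fun _ => c) continuousOn_const
    (fun t _ => by simpa only [hc, mul_zero] using hasDerivWithinAt_const t _ c)
    (fun _ _ => mem_insert c _) hb (left_mem_Icc.2 hab)

theorem mem_Ioo_of_hasDerivAt_mul_of_apply_eq_zero {k h f : ℝ → ℝ} {p q a b : ℝ}
    (hk : Continuous k) (hh : LocallyLipschitz h) (hp : h p = 0) (hq : h q = 0)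
    (hf : ∀ t, HasDerivAt f (k t * h (f t)) t) (hab : a ≤ b) (ha : f a ∈ Ioo p q) :
    f b ∈ Ioo p q := by
  have hfc : ContinuousOn f (Icc a b) := HasDerivAt.continuousOn fun t _ => hf t
  have start_of_reach : ∀ c, h c = 0 → c ∈ f '' Icc a b → f a = c := by
    rintro c hc ⟨s, hs, rfl⟩
    exact eq_at_left_of_hasDerivAt_mul_of_apply_eq_zero hk.continuousOn hh hc
      (fun t _ => hf t) hs.1 rfl
  by_contra hb
  rw [mem_Ioo, not_and_or, not_lt, not_lt] at hb
  rcases hb with hpb | hqb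
  · exact ha.1.ne' (start_of_reach p hp (intermediate_value_Icc' hab hfc ⟨hpb, ha.1.le⟩))
  · exact ha.2.ne (start_of_reach q hq (intermediate_value_Icc hab hfc ⟨ha.2.le, hqb⟩))

theorem strictMonoOn_of_hasDerivAt_mul_mul_sin {k φ : ℝ → ℝ} (hk : ∀ s, 0 < k s)
    (hφ : ∀ s, HasDerivAt φ (k s * (φ s * sin (φ s))) s) (hmem : ∀ s, 0 ≤ s → φ s ∈ Ioo 0 π) :
    StrictMonoOn φ (Ici 0) :=
  strictMonoOn_of_deriv_pos (convex_Ici 0) (HasDerivAt.continuousOn fun s _ => hφ s)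
    fun s hs => by
      rw [interior_Ici] at hs
      obtain ⟨hs0, hsπ⟩ := hmem s hs.le
      rw [(hφ s).deriv]
      exact mul_pos (hk s) (mul_pos hs0 (sin_pos_of_pos_of_lt_pi hs0 hsπ))

theorem relaxation_lt_of_forcing_lt {y u : ℝ → ℝ} {r c t : ℝ} (hr : 0 < r)
    (hy : ∀ s, HasDerivAt y (r * (u s - y s)) s) (hu : ∀ s ∈ Ioo 0 t, u s < c) (ht : 0 < t) :
    y t < (1 - exp (-(r * t))) * c + y 0 * exp (-(r * t)) := by
  have hF : ∀ s, HasDerivAt (fun s => exp (r * s) * (y s - c))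
      (r * exp (r * s) * (u s - c)) s := fun s =>
    (((hasDerivAt_id s).const_mul r).exp.mul ((hy s).sub_const c)).congr_deriv
      (by simp only [id_eq]; ring)
  have hanti : StrictAntiOn (fun s => exp (r * s) * (y s - c)) (Icc 0 t) :=
    strictAntiOn_of_hasDerivWithinAt_neg (convex_Icc 0 t)
      (HasDerivAt.continuousOn fun s _ => hF s) (fun s _ => (hF s).hasDerivWithinAt)
      fun s hs => by
        rw [interior_Icc] at hs
        exact mul_neg_of_pos_of_neg (by positivity) (sub_neg.2 (hu s hs))
  have hdecay : exp (r * t) * (y t - c) < y 0 - c := by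
    simpa using hanti (left_mem_Icc.2 ht.le) (right_mem_Icc.2 ht.le) ht
  have hcancel : exp (-(r * t)) * exp (r * t) = 1 := by rw [← exp_add, neg_add_cancel, exp_zero]
  have hscaled := mul_lt_mul_of_pos_left hdecay (exp_pos (-(r * t)))
  rw [← mul_assoc, hcancel, one_mul] at hscaled
  linear_combination hscaled

theorem lt_relaxation_of_lt_forcing {y u : ℝ → ℝ} {r c t : ℝ} (hr : 0 < r)
    (hy : ∀ s, HasDerivAt y (r * (u s - y s)) s) (hu : ∀ s ∈ Ioo 0 t, c < u s) (ht : 0 < t) :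
    (1 - exp (-(r * t))) * c + y 0 * exp (-(r * t)) < y t := by
  have := relaxation_lt_of_forcing_lt (y := -y) (u := -u) (c := -c) hr
    (fun s => (hy s).neg.congr_deriv (by simp only [Pi.neg_apply]; ring))
    (fun s hs => neg_lt_neg (hu s hs)) ht
  simp only [Pi.neg_apply] at this
  linarith

/-- Magnitude bounds for the one-layer single ReLU neuron gradient flow:
`(1-ε₀)(1-e^{-t/2})‖w*‖ + ‖w(0)‖e^{-t/2} < ‖w(t)‖ < (1-e^{-t/2})‖w*‖ + ‖w(0)‖e^{-t/2}`. -/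
theorem one_layer_magnitude_bounds
    (a : ℝ) (ha : 0 < a) (W φ : ℝ → ℝ)
    (hWpos : ∀ t, 0 < W t)
    (hW : ∀ t, HasDerivAt W
      (-(1/2) * W t + (1/2) * a * (Real.sin (φ t) - φ t * Real.cos (φ t)) / π) t)
    (hφ : ∀ t, HasDerivAt φ ((1/2) * (a / W t) * (φ t * Real.sin (φ t)) / π) t)
    (h0 : 0 < φ 0 ∧ φ 0 < π)
    (ε0 : ℝ) (hε0 : ε0 = 1 - (Real.sin (φ 0) - φ 0 * Real.cos (φ 0)) / π) :
    ∀ t > 0,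
      (1 - ε0) * (1 - Real.exp (-t/2)) * a + W 0 * Real.exp (-t/2) < W t ∧
      W t < (1 - Real.exp (-t/2)) * a + W 0 * Real.exp (-t/2) := by
  intro t ht
  have hrate : ∀ s, 0 < a / (2 * π * W s) := fun s => div_pos ha (mul_pos two_pi_pos (hWpos s))
  have hrate_cont : Continuous fun s => a / (2 * π * W s) :=
    continuous_const.div (continuous_const.mul
      (continuous_iff_continuousAt.2 fun s => (hW s).continuousAt))
      fun s => (mul_pos two_pi_pos (hWpos s)).ne'
  have hφ' : ∀ s, HasDerivAt φ (a / (2 * π * W s) * (φ s * sin (φ s))) s := fun s =>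
    (hφ s).congr_deriv (by field_simp)
  have hmem : ∀ s, 0 ≤ s → φ s ∈ Ioo 0 π := fun s hs =>
    mem_Ioo_of_hasDerivAt_mul_of_apply_eq_zero hrate_cont
      (contDiff_id.mul contDiff_sin).locallyLipschitz (by simp) (by simp) hφ' hs h0
  have hφ_mono := strictMonoOn_of_hasDerivAt_mul_mul_sin hrate hφ' hmem
  have hW' : ∀ s, HasDerivAt W (1/2 * (a * (sin (φ s) - φ s * cos (φ s)) / π - W s)) s :=
    fun s => (hW s).congr_deriv (by ring)
  rw [show -t/2 = -(1/2 * t) by ring]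
  constructor
  · refine (lt_relaxation_of_lt_forcing (c := (1 - ε0) * a) one_half_pos hW' (fun s hs => ?_)
      ht).trans_eq' (by ring)
    have hlt : sin (φ 0) - φ 0 * cos (φ 0) < sin (φ s) - φ s * cos (φ s) :=
      strictMonoOn_sin_sub_mul_cos (Ioo_subset_Icc_self (hmem 0 le_rfl))
        (Ioo_subset_Icc_self (hmem s hs.1.le)) (hφ_mono self_mem_Ici hs.1.le hs.1)
    rw [hε0, sub_sub_cancel, mul_comm, mul_div_assoc]
    exact mul_lt_mul_of_pos_left (div_lt_div_of_pos_right hlt pi_pos) ha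
  · refine relaxation_lt_of_forcing_lt one_half_pos hW' (fun s hs => ?_) ht
    rw [mul_div_assoc]
    exact mul_lt_of_lt_one_right ha
      ((div_lt_one pi_pos).2 (sin_sub_mul_cos_lt_pi (hmem s hs.1.le)))
end

section
/- Let φ(t) satisfy dφ/dt = (1/2)(‖w*‖/‖w(t)‖)(φ sin φ)/π with φ(0) = φ_0 ∈ (0, π), where r < ‖w(t)‖ < R for all t > 0 with constants r, R > 0. Then for all t > 0: π - 2 cot(φ_0/2) e^{-(‖w*‖/(2R))(φ_0/π) t} < φ(t) < π - 2 cot(φ_0/2) e^{-(‖w*‖/(2r)) t} + (2/3) cot^3(φ_0/2) e^{-(3‖w*‖/(2r)) t}. -/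
/-!
The substitution `g = cot (φ / 2)` linearises the angle equation: `g' = -k g` with rate
`k = a φ / (2π W)`. While `φ` stays in `(φ₀, π)` and `r < W < R`, the rate lies strictly between
`a φ₀ / (2π R)` and `a / (2r)`, so `g` is squeezed between the two corresponding exponentials.
The lower exponential also shows that `φ` never reaches `π` (where `g` vanishes), so `φ` indeed
stays in `(0, π)`. Finally `φ = π - 2 arctan g` and `x - x³/3 ≤ arctan x ≤ x` for `x ≥ 0` turn the
bounds on `g` into the bounds on `φ`.
-/

open Real Set

namespace Real

theorem sub_pow_three_div_three_le_arctan {x : ℝ} (hx : 0 ≤ x) : x - x ^ 3 / 3 ≤ arctan x := by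
  have hderiv (y : ℝ) :
      HasDerivAt (fun z => arctan z - (z - z ^ 3 / 3)) (y ^ 4 / (1 + y ^ 2)) y := by
    refine ((hasDerivAt_arctan y).sub ((hasDerivAt_id' y).sub
      ((hasDerivAt_pow 3 y).div_const 3))).congr_deriv ?_
    field_simp
    ring
  have hmono : MonotoneOn (fun z => arctan z - (z - z ^ 3 / 3)) (Ici 0) :=
    monotoneOn_of_hasDerivWithinAt_nonneg (convex_Ici 0)
      (fun y _ => (hderiv y).continuousAt.continuousWithinAt)
      (fun y _ => (hderiv y).hasDerivWithinAt) (fun y _ => by positivity)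
  simpa using hmono self_mem_Ici hx hx

theorem arctan_lt_self {x : ℝ} (hx : 0 < x) : arctan x < x := by
  simpa using lt_tan (arctan_pos.2 hx) (arctan_lt_pi_div_two x)

theorem cot_pos_of_pos_of_lt_pi_div_two {x : ℝ} (h0 : 0 < x) (hπ : x < π / 2) : 0 < cot x := by
  rw [cot_eq_cos_div_sin]
  exact div_pos (cos_pos_of_mem_Ioo ⟨by linarith, hπ⟩)
    (sin_pos_of_pos_of_lt_pi h0 (by linarith))

theorem eq_pi_sub_two_mul_arctan_cot_half {x : ℝ} (h0 : 0 < x) (h2π : x < 2 * π) :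
    x = π - 2 * arctan (cot (x / 2)) := by
  rw [← tan_inv_eq_cot, ← tan_pi_div_two_sub, arctan_tan (by linarith) (by linarith)]
  ring

theorem hasDerivAt_cot {x : ℝ} (hx : sin x ≠ 0) : HasDerivAt cot (-1 / sin x ^ 2) x := by
  rw [show cot = fun y => cos y / sin y from funext cot_eq_cos_div_sin]
  refine ((hasDerivAt_cos x).div (hasDerivAt_sin x) hx).congr_deriv ?_
  rw [← sin_sq_add_cos_sq x]
  ring

end Real

theorem Continuous.exists_first_mem_frontier {X : Type*} [TopologicalSpace X] {f : ℝ → X}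
    (hf : Continuous f) {U : Set X} (hU : IsOpen U) (h0 : f 0 ∈ U)
    (hexit : ∃ u, 0 ≤ u ∧ f u ∉ U) :
    ∃ s, 0 < s ∧ f s ∈ frontier U ∧ ∀ v ∈ Ico 0 s, f v ∈ U := by
  set S := Ici 0 ∩ f ⁻¹' Uᶜ
  have hbdd : BddBelow S := ⟨0, fun _ hv => hv.1⟩
  obtain ⟨hs0, hsU⟩ : sInf S ∈ S :=
    (isClosed_Ici.inter (hU.isClosed_compl.preimage hf)).csInf_mem hexit hbdd
  have hbefore : ∀ v ∈ Ico 0 (sInf S), f v ∈ U := fun v hv => by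
    by_contra hvU
    exact (csInf_le hbdd ⟨hv.1, hvU⟩).not_gt hv.2
  have hspos : 0 < sInf S := hs0.lt_of_ne' fun hs => hsU (hs ▸ h0)
  refine ⟨sInf S, hspos, ⟨map_mem_closure hf ?_ hbefore, fun hs => hsU (interior_subset hs)⟩,
    hbefore⟩
  rw [closure_Ico hspos.ne]
  exact right_mem_Icc.2 hs0

theorem mul_exp_neg_lt_of_hasDerivAt {f k : ℝ → ℝ} {K t : ℝ} (ht : 0 < t)
    (hcont : ContinuousOn f (Icc 0 t)) (hderiv : ∀ v ∈ Ioo 0 t, HasDerivAt f (-(k v * f v)) v)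
    (hpos : ∀ v ∈ Ioo 0 t, 0 < (K - k v) * f v) :
    f 0 * exp (-K * t) < f t := by
  have hmono : StrictMonoOn (fun v => f v * exp (K * v)) (Icc 0 t) := by
    refine strictMonoOn_of_hasDerivWithinAt_pos (convex_Icc 0 t)
      (hcont.mul (continuous_exp.comp (continuous_const_mul K)).continuousOn)
      (f' := fun v => (K - k v) * f v * exp (K * v)) (fun v hv => ?_) (fun v hv => ?_)
    · rw [interior_Icc] at hv
      refine (((hderiv v hv).mul (((hasDerivAt_id' v).const_mul K).exp)).congr_deriv ?_)
        |>.hasDerivWithinAt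
      ring
    · rw [interior_Icc] at hv
      exact mul_pos (hpos v hv) (exp_pos _)
  have h := hmono (left_mem_Icc.2 ht.le) (right_mem_Icc.2 ht.le) ht
  simp only [mul_zero, exp_zero, mul_one] at h
  calc f 0 * exp (-K * t) < f t * exp (K * t) * exp (-K * t) := by gcongr
    _ = f t := by rw [mul_assoc, ← exp_add, neg_mul, add_neg_cancel, exp_zero, mul_one]

theorem lt_mul_exp_neg_of_hasDerivAt {f k : ℝ → ℝ} {K t : ℝ} (ht : 0 < t)
    (hcont : ContinuousOn f (Icc 0 t)) (hderiv : ∀ v ∈ Ioo 0 t, HasDerivAt f (-(k v * f v)) v)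
    (hneg : ∀ v ∈ Ioo 0 t, (K - k v) * f v < 0) :
    f t < f 0 * exp (-K * t) := by
  have h := mul_exp_neg_lt_of_hasDerivAt (f := -f) (k := k) ht hcont.neg
    (fun v hv => (hderiv v hv).neg.congr_deriv (by simp)) (fun v hv => by simpa using hneg v hv)
  simpa using h

namespace ReLUAngle

variable {a : ℝ} {W φ : ℝ → ℝ}
  (hφ : ∀ t, HasDerivAt φ ((1/2) * (a / W t) * (φ t * sin (φ t)) / π) t)
include hφ

theorem hasDerivAt_cot_half {t : ℝ} (ht : sin (φ t / 2) ≠ 0) :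
    HasDerivAt (fun v => cot (φ v / 2)) (-(a / W t * φ t / (2 * π) * cot (φ t / 2))) t := by
  refine ((hasDerivAt_cot ht).comp t ((hφ t).div_const 2)).congr_deriv ?_
  rw [cot_eq_cos_div_sin, show φ t = 2 * (φ t / 2) by ring, sin_two_mul]
  field_simp

theorem strictMonoOn_Icc (ha : 0 < a) {t : ℝ} (hW : ∀ v ∈ Ioo 0 t, 0 < W v)
    (hmem : ∀ v ∈ Ioo 0 t, φ v ∈ Ioo 0 π) : StrictMonoOn φ (Icc 0 t) := by
  refine strictMonoOn_of_hasDerivWithinAt_pos (convex_Icc 0 t)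
    (fun v _ => (hφ v).continuousAt.continuousWithinAt) (fun v _ => (hφ v).hasDerivWithinAt)
    (fun v hv => ?_)
  rw [interior_Icc] at hv
  obtain ⟨h0, hπ⟩ := hmem v hv
  have := hW v hv
  have := sin_pos_of_pos_of_lt_pi h0 hπ
  positivity

theorem mul_exp_lt_cot_half (ha : 0 < a) {r t : ℝ} (hr : 0 < r) (ht : 0 < t)
    (hW : ∀ v ∈ Ioo 0 t, r < W v) (hmem : ∀ v ∈ Ico 0 t, φ v ∈ Ioo 0 π)
    (hend : φ t ∈ Ioc 0 π) :
    cot (φ 0 / 2) * exp (-(a / (2 * r)) * t) < cot (φ t / 2) := by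
  have hsin : ∀ v ∈ Icc 0 t, sin (φ v / 2) ≠ 0 := fun v hv => by
    obtain ⟨h0, hπ⟩ : φ v ∈ Ioc 0 π := by
      rcases hv.2.lt_or_eq with hvt | rfl
      · exact Ioo_subset_Ioc_self (hmem v ⟨hv.1, hvt⟩)
      · exact hend
    exact (sin_pos_of_pos_of_lt_pi (by linarith) (by linarith)).ne'
  refine mul_exp_neg_lt_of_hasDerivAt ht
    (fun v hv => (hasDerivAt_cot_half hφ (hsin v hv)).continuousAt.continuousWithinAt)
    (fun v hv => hasDerivAt_cot_half hφ (hsin v (Ioo_subset_Icc_self hv))) (fun v hv => ?_)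
  obtain ⟨h0, hπ⟩ := hmem v (Ioo_subset_Ico_self hv)
  have hWv := hW v hv
  have hrate : a / W v * φ v / (2 * π) < a / (2 * r) :=
    calc a / W v * φ v / (2 * π) = a / (2 * π) * (φ v / W v) := by ring
      _ < a / (2 * π) * (π / r) := by gcongr
      _ = a / (2 * r) := by field_simp
  exact mul_pos (sub_pos.2 hrate) (cot_pos_of_pos_of_lt_pi_div_two (half_pos h0) (by linarith))

theorem mem_Ioo_of_nonneg (ha : 0 < a) {r : ℝ} (hr : 0 < r) (hW : ∀ t > 0, r < W t)
    (h0 : φ 0 ∈ Ioo 0 π) : ∀ t ≥ 0, φ t ∈ Ioo 0 π := by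
  by_contra! hexit
  obtain ⟨s, hs, hfront, hbefore⟩ := (continuous_iff_continuousAt.2 fun t => (hφ t).continuousAt)
    |>.exists_first_mem_frontier isOpen_Ioo h0 hexit
  have hφs : φ 0 < φ s :=
    strictMonoOn_Icc hφ ha (fun v hv => hr.trans (hW v hv.1))
      (fun v hv => hbefore v (Ioo_subset_Ico_self hv)) (left_mem_Icc.2 hs.le)
      (right_mem_Icc.2 hs.le) hs
  rw [frontier_Ioo pi_pos, mem_insert_iff, mem_singleton_iff] at hfront
  have hπ : φ s = π := hfront.resolve_left (by linarith [h0.1])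
  have h := mul_exp_lt_cot_half hφ ha hr hs (fun v hv => hW v hv.1) hbefore
    (by rw [hπ]; exact ⟨pi_pos, le_rfl⟩)
  rw [hπ, cot_eq_cos_div_sin (π / 2), cos_pi_div_two, zero_div] at h
  have hcot0 := cot_pos_of_pos_of_lt_pi_div_two (half_pos h0.1) (by linarith [h0.2])
  exact h.not_ge (mul_pos hcot0 (exp_pos _)).le

theorem cot_half_lt_mul_exp (ha : 0 < a) {R t : ℝ} (ht : 0 < t)
    (hW : ∀ v ∈ Ioo 0 t, 0 < W v ∧ W v < R) (hmem : ∀ v ∈ Icc 0 t, φ v ∈ Ioo 0 π) :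
    cot (φ t / 2) < cot (φ 0 / 2) * exp (-(a / (2 * R)) * (φ 0 / π) * t) := by
  have hmono := strictMonoOn_Icc hφ ha (fun v hv => (hW v hv).1)
    (fun v hv => hmem v (Ioo_subset_Icc_self hv))
  have hderiv : ∀ v ∈ Icc 0 t, HasDerivAt (fun v => cot (φ v / 2))
      (-(a / W v * φ v / (2 * π) * cot (φ v / 2))) v := fun v hv =>
    hasDerivAt_cot_half hφ (sin_pos_of_pos_of_lt_pi (by linarith [(hmem v hv).1])
      (by linarith [(hmem v hv).2, pi_pos])).ne'
  rw [neg_mul (a / (2 * R))]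
  refine lt_mul_exp_neg_of_hasDerivAt ht
    (fun v hv => (hderiv v hv).continuousAt.continuousWithinAt)
    (fun v hv => hderiv v (Ioo_subset_Icc_self hv)) (fun v hv => ?_)
  obtain ⟨h0, hπ⟩ := hmem v (Ioo_subset_Icc_self hv)
  obtain ⟨hW0, hWR⟩ := hW v hv
  have hφ0 : φ 0 < φ v := hmono (left_mem_Icc.2 ht.le) (Ioo_subset_Icc_self hv) hv.1
  have hrate : a / (2 * R) * (φ 0 / π) < a / W v * φ v / (2 * π) :=
    calc a / (2 * R) * (φ 0 / π) = a / (2 * π) * (φ 0 / R) := by ring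
      _ < a / (2 * π) * (φ v / W v) := by gcongr
      _ = a / W v * φ v / (2 * π) := by ring
  exact mul_neg_of_neg_of_pos (sub_neg.2 hrate)
    (cot_pos_of_pos_of_lt_pi_div_two (half_pos h0) (by linarith))

end ReLUAngle

theorem one_layer_angle_bounds_general
    (a r R : ℝ) (ha : 0 < a) (hr : 0 < r)
    (W φ : ℝ → ℝ) (φ0 : ℝ) (hinit : φ 0 = φ0) (h0 : 0 < φ0 ∧ φ0 < π)
    (hbound : ∀ t > 0, r < W t ∧ W t < R)
    (hφ : ∀ t, HasDerivAt φ ((1/2) * (a / W t) * (φ t * Real.sin (φ t)) / π) t) :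
    ∀ t > 0,
      π - 2 * Real.cot (φ0/2) * Real.exp (-(a/(2*R)) * (φ0/π) * t) < φ t ∧
      φ t < π - 2 * Real.cot (φ0/2) * Real.exp (-(a/(2*r)) * t)
              + (2/3) * (Real.cot (φ0/2))^3 * Real.exp (-(3*a/(2*r)) * t) := by
  subst hinit
  intro t ht
  have hmem := ReLUAngle.mem_Ioo_of_nonneg hφ ha hr (fun t ht => (hbound t ht).1) h0
  have hlower := ReLUAngle.mul_exp_lt_cot_half hφ ha hr ht (fun v hv => (hbound v hv.1).1)
    (fun v hv => hmem v hv.1) (Ioo_subset_Ioc_self (hmem t ht.le))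
  have hupper := ReLUAngle.cot_half_lt_mul_exp hφ ha ht
    (fun v hv => ⟨hr.trans (hbound v hv.1).1, (hbound v hv.1).2⟩) (fun v hv => hmem v hv.1)
  obtain ⟨hφt0, hφtπ⟩ := hmem t ht.le
  rw [eq_pi_sub_two_mul_arctan_cot_half hφt0 (by linarith [pi_pos])]
  constructor
  · have := arctan_lt_self (cot_pos_of_pos_of_lt_pi_div_two (half_pos hφt0) (by linarith))
    linarith
  · set y := cot (φ 0 / 2) * exp (-(a / (2 * r)) * t)
    have hy : 0 ≤ y :=
      (mul_pos (cot_pos_of_pos_of_lt_pi_div_two (half_pos h0.1) (by linarith)) (exp_pos _)).le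
    have hcube : y ^ 3 = cot (φ 0 / 2) ^ 3 * exp (-(3 * a / (2 * r)) * t) := by
      rw [mul_pow, ← exp_nat_mul]
      ring_nf
    have := arctan_strictMono hlower
    have := sub_pow_three_div_three_le_arctan hy
    linarith

/-- Angle bounds for the one-layer single ReLU neuron gradient flow, assuming
`r < ‖w(t)‖ < R` for all `t > 0`. -/
theorem one_layer_angle_bounds
    (a r R : ℝ) (ha : 0 < a) (hr : 0 < r) (hR : 0 < R)
    (W φ : ℝ → ℝ) (φ0 : ℝ) (hinit : φ 0 = φ0) (h0 : 0 < φ0 ∧ φ0 < π)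
    (hbound : ∀ t > 0, r < W t ∧ W t < R)
    (hφ : ∀ t, HasDerivAt φ ((1/2) * (a / W t) * (φ t * Real.sin (φ t)) / π) t) :
    ∀ t > 0,
      π - 2 * Real.cot (φ0/2) * Real.exp (-(a/(2*R)) * (φ0/π) * t) < φ t ∧
      φ t < π - 2 * Real.cot (φ0/2) * Real.exp (-(a/(2*r)) * t)
              + (2/3) * (Real.cot (φ0/2))^3 * Real.exp (-(3*a/(2*r)) * t) :=
  one_layer_angle_bounds_general a r R ha hr W φ φ0 hinit h0 hbound hφ
end

section
/- Consider the two-layer system dv/dt = -(1/2) v (v^2 - v*^2 (sin φ - φ cos φ)/π), dφ/dt = v*^2 (φ sin φ)/(2π), with v(0) = v_0 > 0, φ(0) = φ_0 ∈ (0, π). Let ε_0 = 1 - (sin φ_0 - φ_0 cos φ_0)/π. Then for all t > 0: v* sqrt((1-ε_0)/(1 - (1 - (1-ε_0)(v*/v_0)^2) e^{-(1-ε_0) v*^2 t})) < v(t) < v* sqrt(1/(1 - (1 - (v*/v_0)^2) e^{-v*^2 t})). -/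
/-!
With `w = v⁻²` the magnitude equation becomes linear, `w' = 1 - v*² a(φ) w`, where
`a(φ) = (sin φ - φ cos φ) / π = 1 - ε` (`alignment`). The angle stays in `(0, π)` and
increases there, and `a` increases on `[0, π]` from `0` to `1`, so `1 - ε₀ = a(φ₀) < a(φ(t)) < 1`
for `t > 0`. Comparing `w` with the explicit solutions `affineFlow c v₀⁻²` of `w' = 1 - c w`,
`w 0 = v₀⁻²`, for `c = v*²` and `c = (1 - ε₀) v*²` gives the two bounds.
-/

open Real Set

section IntegratingFactor

variable {a b f : ℝ → ℝ}

theorem hasDerivAt_mul_exp_integral (ha : Continuous a)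
    (hf : ∀ t, HasDerivAt f (b t - a t * f t) t) (t : ℝ) :
    HasDerivAt (fun t => f t * exp (∫ s in (0 : ℝ)..t, a s))
      (b t * exp (∫ s in (0 : ℝ)..t, a s)) t :=
  ((hf t).mul (ha.integral_hasStrictDerivAt 0 t).hasDerivAt.exp).congr_deriv (by ring)

theorem eq_mul_exp_integral_of_hasDerivAt (ha : Continuous a)
    (hf : ∀ t, HasDerivAt f (a t * f t) t) (t : ℝ) :
    f t = f 0 * exp (∫ s in (0 : ℝ)..t, a s) := by
  have hconst := hasDerivAt_mul_exp_integral (b := 0) ha.neg fun t =>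
    (hf t).congr_deriv (by simp)
  have := is_const_of_deriv_eq_zero (fun x => (hconst x).differentiableAt)
    (fun x => by simpa using (hconst x).deriv) t 0
  simp only [Pi.neg_apply, intervalIntegral.integral_neg, intervalIntegral.integral_same,
    exp_zero, mul_one] at this
  rw [← this, mul_assoc, ← exp_add, neg_add_cancel, exp_zero, mul_one]

theorem pos_of_hasDerivAt_eq_mul (ha : Continuous a)
    (hf : ∀ t, HasDerivAt f (a t * f t) t) (h0 : 0 < f 0) (t : ℝ) : 0 < f t := by
  rw [eq_mul_exp_integral_of_hasDerivAt ha hf t]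
  positivity

theorem lt_of_hasDerivAt_sub_mul {F c d u w : ℝ → ℝ} (hc : Continuous c)
    (hw : ∀ t, HasDerivAt w (F t - c t * w t) t) (hu : ∀ t, HasDerivAt u (F t - d t * u t) t)
    (h0 : w 0 = u 0) (hcd : ∀ t > 0, c t * u t < d t * u t) {t : ℝ} (ht : 0 < t) :
    u t < w t := by
  have hD := hasDerivAt_mul_exp_integral (f := fun s => w s - u s)
    (b := fun s => d s * u s - c s * u s) hc fun s => ((hw s).sub (hu s)).congr_deriv (by ring)
  have hmono := strictMonoOn_of_deriv_pos (convex_Icc 0 t)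
    (fun x _ => (hD x).continuousAt.continuousWithinAt) fun x hx => by
      rw [interior_Icc] at hx
      rw [(hD x).deriv]
      exact mul_pos (sub_pos.2 (hcd x hx.1)) (exp_pos _)
  have := hmono (left_mem_Icc.2 ht.le) (right_mem_Icc.2 ht.le) ht
  simp only [h0, sub_self, zero_mul] at this
  exact sub_pos.1 (pos_of_mul_pos_left this (exp_pos _).le)

end IntegratingFactor

noncomputable def affineFlow (c w₀ t : ℝ) : ℝ := c⁻¹ + (w₀ - c⁻¹) * exp (-(c * t))

theorem hasDerivAt_affineFlow {c : ℝ} (hc : c ≠ 0) (w₀ t : ℝ) :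
    HasDerivAt (affineFlow c w₀) (1 - c * affineFlow c w₀ t) t := by
  refine ((((hasDerivAt_id t).const_mul c).neg.exp.const_mul (w₀ - c⁻¹)).const_add
    c⁻¹).congr_deriv ?_
  simp only [affineFlow, id, Pi.neg_apply]
  field_simp
  ring

theorem affineFlow_zero (c w₀ : ℝ) : affineFlow c w₀ 0 = w₀ := by
  simp [affineFlow]

theorem affineFlow_pos {c w₀ t : ℝ} (hc : 0 < c) (hw₀ : 0 < w₀) (ht : 0 ≤ t) :
    0 < affineFlow c w₀ t := by
  have he : exp (-(c * t)) ≤ 1 := exp_le_one_iff.2 (by nlinarith)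
  have : 0 < c⁻¹ := inv_pos.2 hc
  have := exp_pos (-(c * t))
  simp only [affineFlow]
  nlinarith

section LinearRelaxation

variable {c w : ℝ → ℝ} (hw : ∀ t, HasDerivAt w (1 - c t * w t) t)
include hw

theorem affineFlow_lt_of_hasDerivAt {c₀ : ℝ} (hc : Continuous c) (hc₀ : 0 < c₀) (hw0 : 0 < w 0)
    (hlt : ∀ t > 0, c t < c₀) {t : ℝ} (ht : 0 < t) : affineFlow c₀ (w 0) t < w t :=
  lt_of_hasDerivAt_sub_mul hc hw (hasDerivAt_affineFlow hc₀.ne' _) (affineFlow_zero _ _).symm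
    (fun s hs => mul_lt_mul_of_pos_right (hlt s hs) (affineFlow_pos hc₀ hw0 hs.le)) ht

theorem lt_affineFlow_of_hasDerivAt {c₀ : ℝ} (hc₀ : c₀ ≠ 0) (hwpos : ∀ t, 0 < w t)
    (hlt : ∀ t > 0, c₀ < c t) {t : ℝ} (ht : 0 < t) : w t < affineFlow c₀ (w 0) t :=
  lt_of_hasDerivAt_sub_mul continuous_const (hasDerivAt_affineFlow hc₀ _) hw (affineFlow_zero _ _)
    (fun s hs => mul_lt_mul_of_pos_right (hlt s hs) (hwpos s)) ht

end LinearRelaxation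

theorem mul_sqrt_div_eq_sqrt_inv_affineFlow {κ vs v₀ : ℝ} (hκ : κ ≠ 0) (hvs : 0 < vs)
    (hv₀ : v₀ ≠ 0) (t : ℝ) :
    vs * sqrt (κ / (1 - (1 - κ * (vs / v₀) ^ 2) * exp (-κ * vs ^ 2 * t))) =
      sqrt (affineFlow (κ * vs ^ 2) (v₀ ^ 2)⁻¹ t)⁻¹ := by
  set D := 1 - (1 - κ * (vs / v₀) ^ 2) * exp (-κ * vs ^ 2 * t) with hD
  have hflow : affineFlow (κ * vs ^ 2) (v₀ ^ 2)⁻¹ t = (κ * vs ^ 2)⁻¹ * D := by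
    simp only [affineFlow, hD, neg_mul, mul_assoc]
    field_simp
    ring
  rw [hflow, mul_inv, inv_inv, show κ * vs ^ 2 * D⁻¹ = vs ^ 2 * (κ / D) by ring,
    sqrt_mul (sq_nonneg vs), sqrt_sq hvs.le]

noncomputable def alignment (x : ℝ) : ℝ := (sin x - x * cos x) / π

theorem hasDerivAt_alignment (x : ℝ) : HasDerivAt alignment (x * sin x / π) x :=
  ((hasDerivAt_sin x).sub ((hasDerivAt_id x).mul (hasDerivAt_cos x))).div_const π
    |>.congr_deriv (by simp only [id]; ring)

@[fun_prop]
theorem continuous_alignment : Continuous alignment := by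
  unfold alignment
  fun_prop

theorem strictMonoOn_alignment : StrictMonoOn alignment (Icc 0 π) :=
  strictMonoOn_of_deriv_pos (convex_Icc 0 π) continuous_alignment.continuousOn fun x hx => by
    rw [interior_Icc] at hx
    rw [(hasDerivAt_alignment x).deriv]
    exact div_pos (mul_pos hx.1 (sin_pos_of_pos_of_lt_pi hx.1 hx.2)) pi_pos

theorem alignment_zero : alignment 0 = 0 := by
  simp [alignment]

theorem alignment_pi : alignment π = 1 := by
  simp [alignment, pi_ne_zero]

theorem alignment_mem_Ioo {x : ℝ} (hx : x ∈ Ioo 0 π) : alignment x ∈ Ioo 0 1 := by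
  have hπ : π ∈ Icc 0 π := right_mem_Icc.2 pi_pos.le
  constructor
  · exact alignment_zero ▸ strictMonoOn_alignment (left_mem_Icc.2 pi_pos.le)
      (Ioo_subset_Icc_self hx) hx.1
  · exact alignment_pi ▸ strictMonoOn_alignment (Ioo_subset_Icc_self hx) hπ hx.2

section AngleFlow

variable {k : ℝ} {φ : ℝ → ℝ} (hφ : ∀ t, HasDerivAt φ (k * (φ t * sin (φ t))) t)
include hφ

theorem mem_Ioo_of_hasDerivAt_angle (h0 : φ 0 ∈ Ioo 0 π) (t : ℝ) : φ t ∈ Ioo 0 π := by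
  have hφc : Continuous φ := continuous_iff_continuousAt.2 fun t => (hφ t).continuousAt
  refine ⟨pos_of_hasDerivAt_eq_mul (a := fun t => k * sin (φ t)) (by fun_prop)
    (fun t => (hφ t).congr_deriv (by ring)) h0.1 t, sub_pos.1 ?_⟩
  -- `π` is an equilibrium: writing `sin φ = sinc (π - φ) * (π - φ)` makes the equation for
  -- `π - φ` linear
  have hsin : ∀ x, sin x = sinc (π - x) * (π - x) := fun x => by
    rcases eq_or_ne (π - x) 0 with hx | hx
    · simp [show x = π by linarith]
    · rw [sinc_of_ne_zero hx, div_mul_cancel₀ _ hx, sin_pi_sub]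
  refine pos_of_hasDerivAt_eq_mul (f := fun t => π - φ t)
    (a := fun t => -(k * φ t * sinc (π - φ t))) (by fun_prop)
    (fun t => ((hφ t).const_sub π).congr_deriv ?_) (sub_pos.2 h0.2) t
  rw [hsin (φ t)]
  ring

theorem strictMono_of_hasDerivAt_angle (hk : 0 < k) (h0 : φ 0 ∈ Ioo 0 π) : StrictMono φ :=
  strictMono_of_deriv_pos fun t => by
    obtain ⟨hpos, hlt⟩ := mem_Ioo_of_hasDerivAt_angle hφ h0 t
    rw [(hφ t).deriv]
    exact mul_pos hk (mul_pos hpos (sin_pos_of_pos_of_lt_pi hpos hlt))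

theorem strictMono_alignment_of_hasDerivAt_angle (hk : 0 < k) (h0 : φ 0 ∈ Ioo 0 π) :
    StrictMono fun t => alignment (φ t) := fun _ _ hst =>
  strictMonoOn_alignment (Ioo_subset_Icc_self (mem_Ioo_of_hasDerivAt_angle hφ h0 _))
    (Ioo_subset_Icc_self (mem_Ioo_of_hasDerivAt_angle hφ h0 _))
    (strictMono_of_hasDerivAt_angle hφ hk h0 hst)

end AngleFlow

section MagnitudeFlow

variable {v c : ℝ → ℝ} (hv : ∀ t, HasDerivAt v (-(1 / 2) * v t * (v t ^ 2 - c t)) t)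
include hv

theorem pos_of_hasDerivAt_magnitude (hc : Continuous c) (h0 : 0 < v 0) (t : ℝ) : 0 < v t := by
  have hvc : Continuous v := continuous_iff_continuousAt.2 fun t => (hv t).continuousAt
  exact pos_of_hasDerivAt_eq_mul (a := fun t => -(1 / 2) * (v t ^ 2 - c t)) (by fun_prop)
    (fun t => (hv t).congr_deriv (by ring)) h0 t

theorem hasDerivAt_inv_sq_magnitude {t : ℝ} (hvt : v t ≠ 0) :
    HasDerivAt (fun t => (v t ^ 2)⁻¹) (1 - c t * (v t ^ 2)⁻¹) t :=
  (((hv t).pow 2).inv (pow_ne_zero 2 hvt)).congr_deriv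
    (by simp only [Pi.pow_apply]; field_simp; ring)

end MagnitudeFlow

/-- Magnitude bounds for the two-layer (`m = 1`) single ReLU neuron gradient flow with
balanced initialization. -/
theorem two_layer_magnitude_bounds
    (vs v0 φ0 : ℝ) (hvs : 0 < vs) (hv0 : 0 < v0) (hφ0 : 0 < φ0 ∧ φ0 < π)
    (v φ : ℝ → ℝ) (hiv : v 0 = v0) (hiφ : φ 0 = φ0)
    (hv : ∀ t, HasDerivAt v
      (-(1/2) * v t * ((v t)^2 - vs^2 * (Real.sin (φ t) - φ t * Real.cos (φ t)) / π)) t)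
    (hφ : ∀ t, HasDerivAt φ (vs^2 * (φ t * Real.sin (φ t)) / (2*π)) t)
    (ε0 : ℝ) (hε0 : ε0 = 1 - (Real.sin φ0 - φ0 * Real.cos φ0) / π) :
    ∀ t > 0,
      vs * Real.sqrt ((1-ε0) /
          (1 - (1 - (1-ε0) * (vs/v0)^2) * Real.exp (-(1-ε0) * vs^2 * t))) < v t ∧
      v t < vs * Real.sqrt (1 / (1 - (1 - (vs/v0)^2) * Real.exp (-vs^2 * t))) := by
  intro t ht
  have hφ' : ∀ t, HasDerivAt φ (vs ^ 2 / (2 * π) * (φ t * sin (φ t))) t :=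
    fun t => (hφ t).congr_deriv (by ring)
  have hφ0' : φ 0 ∈ Ioo 0 π := hiφ ▸ hφ0
  have hφmem := mem_Ioo_of_hasDerivAt_angle hφ' hφ0'
  have hφc : Continuous φ := continuous_iff_continuousAt.2 fun t => (hφ t).continuousAt
  have hv' : ∀ t, HasDerivAt v (-(1 / 2) * v t * (v t ^ 2 - vs ^ 2 * alignment (φ t))) t :=
    fun t => (hv t).congr_deriv (by rw [alignment, mul_div_assoc])
  have hvpos := pos_of_hasDerivAt_magnitude hv' (by fun_prop) (hiv ▸ hv0)
  have hw := fun s => hasDerivAt_inv_sq_magnitude hv' (hvpos s).ne'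
  have hwpos : ∀ s, 0 < (v s ^ 2)⁻¹ := fun s => inv_pos.2 (pow_pos (hvpos s) 2)
  have hκ : 1 - ε0 = alignment (φ 0) := by rw [hε0, sub_sub_cancel, hiφ, alignment]
  have hκpos : 0 < 1 - ε0 := hκ ▸ (alignment_mem_Ioo hφ0').1
  have hκvs : 0 < (1 - ε0) * vs ^ 2 := mul_pos hκpos (pow_pos hvs 2)
  have hupper := affineFlow_lt_of_hasDerivAt hw (by fun_prop) (by positivity) (hwpos 0)
    (fun s _ => mul_lt_of_lt_one_right (by positivity) (alignment_mem_Ioo (hφmem s)).2) ht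
  have hlower := lt_affineFlow_of_hasDerivAt hw hκvs.ne' hwpos
    (fun s hs => by
      rw [hκ, mul_comm]
      exact mul_lt_mul_of_pos_left
        (strictMono_alignment_of_hasDerivAt_angle hφ' (by positivity) hφ0' hs) (by positivity)) ht
  rw [hiv] at hupper hlower
  have hsqrt := mul_sqrt_div_eq_sqrt_inv_affineFlow one_ne_zero hvs hv0.ne' t
  simp only [one_mul, neg_one_mul] at hsqrt
  rw [mul_sqrt_div_eq_sqrt_inv_affineFlow hκpos.ne' hvs hv0.ne', hsqrt,
    sqrt_lt' (hvpos t), lt_sqrt (hvpos t).le,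
    inv_lt_comm₀ (affineFlow_pos hκvs (by positivity) ht.le) (pow_pos (hvpos t) 2),
    lt_inv_comm₀ (pow_pos (hvpos t) 2) (affineFlow_pos (by positivity) (by positivity) ht.le)]
  exact ⟨hlower, hupper⟩
end
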